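/- Let K ≥ 1 and let h = (α, β) ∈ ℤ^{2K} be a nonzero vector with α_i = ∑_{j=1}^{i} β_j for all i. Then h can be written as a finite sum h = g^1 + ... + g^M where each g^t = (α^t, β^t) satisfies α^t_i = ∑_{j≤i} β^t_j for all i, g^t ⊑ h in the conformal order, ‖g^t‖_1 ≤ K+1, and ‖β^t‖_1 ≤ 2. -/

import Mathlib

/-!
A nonzero `(α, β)` with `α` the prefix sums of `β` has a first index `p` with `α p ≠ 0`; let
`s` be its sign and `[p, r)` the maximal run on which `s * α` stays positive. The "strand" with
`α`-part `s` on `[p, r)` and `β`-part `s • (e p - e r)` again satisfies the prefix-sum relation,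
is conformal to `(α, β)`, and has `‖·‖₁ ≤ K + 1` and `β`-part of norm `≤ 2`. Subtracting it
leaves another such pair, conformal to `(α, β)` and of strictly smaller norm, so the theorem
follows by induction on the norm, since `⊑` is transitive.
-/

open Finset

def ConformalLE (x y : ℤ) : Prop := 0 ≤ x * y ∧ |x| ≤ |y|

infix:50 " ⊑ " => ConformalLE

theorem conformalLE_iff {x y : ℤ} : x ⊑ y ↔ 0 ≤ x ∧ x ≤ y ∨ y ≤ x ∧ x ≤ 0 := by
  simp only [ConformalLE, mul_nonneg_iff, Int.abs_eq_natAbs]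
  omega

namespace ConformalLE

variable {x y z : ℤ}

theorem trans (hxy : x ⊑ y) (hyz : y ⊑ z) : x ⊑ z := by
  rw [conformalLE_iff] at *
  omega

theorem sub_left (h : x ⊑ y) : y - x ⊑ y := by
  rw [conformalLE_iff] at *
  omega

theorem natAbs_sub_add (h : x ⊑ y) : (y - x).natAbs + x.natAbs = y.natAbs := by
  rw [conformalLE_iff] at h
  omega

theorem of_abs_eq_one (hs : |x| = 1) (h : 0 < x * y) : x ⊑ y := by
  rw [conformalLE_iff]
  rcases (abs_eq zero_le_one).mp hs with rfl | rfl <;> omega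

theorem zero_left : 0 ⊑ y := by simp [ConformalLE]

end ConformalLE

theorem sum_natAbs_sub_lt {ι : Type*} [Fintype ι] {u v : ι → ℤ} (huv : ∀ i, u i ⊑ v i)
    (hu : u ≠ 0) : ∑ i, (v i - u i).natAbs < ∑ i, (v i).natAbs := by
  obtain ⟨i, hi⟩ := Function.ne_iff.mp hu
  have hpos : 0 < ∑ i, (u i).natAbs :=
    (Int.natAbs_pos.mpr hi).trans_le <|
      single_le_sum (f := fun j => (u j).natAbs) (fun _ _ => Nat.zero_le _) (mem_univ i)
  have hsum : ∑ i, (v i - u i).natAbs + ∑ i, (u i).natAbs = ∑ i, (v i).natAbs := by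
    rw [← sum_add_distrib]
    exact sum_congr rfl fun i _ => (huv i).natAbs_sub_add
  omega

theorem exists_conformal_sum {ι : Type*} [Fintype ι] {D S : (ι → ℤ) → Prop}
    (peel : ∀ v, D v → v ≠ 0 → ∃ u, S u ∧ u ≠ 0 ∧ (∀ i, u i ⊑ v i) ∧ D (v - u))
    {v : ι → ℤ} (hv : D v) :
    ∃ (M : ℕ) (g : Fin M → ι → ℤ), ∑ t, g t = v ∧ ∀ t, S (g t) ∧ ∀ i, g t i ⊑ v i := by
  induction h : ∑ i, (v i).natAbs using Nat.strong_induction_on generalizing v with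
  | _ n ih =>
  by_cases hv0 : v = 0
  · exact ⟨0, Fin.elim0, by simp [hv0], fun t => t.elim0⟩
  obtain ⟨u, huS, hu0, huv, hvu⟩ := peel v hv hv0
  obtain ⟨M, g, hg, hgS⟩ := ih _ (h ▸ sum_natAbs_sub_lt huv hu0) hvu rfl
  refine ⟨M + 1, Fin.cons u g, by simp [Fin.sum_univ_succ, hg], Fin.cases ⟨huS, huv⟩ fun t => ?_⟩
  exact ⟨(hgS t).1, fun i => ((hgS t).2 i).trans (huv i).sub_left⟩

section PrefixSum

variable {K : ℕ}

def IsPrefixSum (α β : Fin K → ℤ) : Prop := ∀ i, α i = ∑ j ∈ Iic i, β j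

theorem Fin.Iic_eq_singleton_of_val_eq_zero {i : Fin K} (hi : (i : ℕ) = 0) : Iic i = {i} := by
  ext j
  simp only [mem_Iic, mem_singleton, Fin.le_def, Fin.ext_iff]
  omega

theorem Fin.Iic_eq_insert_of_val_eq_add_one {i j : Fin K} (hij : (j : ℕ) + 1 = i) :
    Iic i = insert i (Iic j) := by
  ext k
  simp only [mem_Iic, mem_insert, Fin.le_def, Fin.ext_iff]
  omega

theorem isPrefixSum_iff {α β : Fin K → ℤ} : IsPrefixSum α β ↔
    (∀ i : Fin K, (i : ℕ) = 0 → β i = α i) ∧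
      ∀ i j : Fin K, (j : ℕ) + 1 = i → β i = α i - α j := by
  have hj (i j : Fin K) (hij : (j : ℕ) + 1 = i) : ∑ k ∈ Iic i, β k = β i + ∑ k ∈ Iic j, β k := by
    rw [Fin.Iic_eq_insert_of_val_eq_add_one hij,
      Finset.sum_insert (by simp only [mem_Iic, Fin.le_def]; omega)]
  constructor
  · intro h
    refine ⟨fun i hi => by rw [h i, Fin.Iic_eq_singleton_of_val_eq_zero hi, sum_singleton],
      fun i j hij => ?_⟩
    rw [h i, h j, hj i j hij]
    ring
  · rintro ⟨h0, hsucc⟩ ⟨n, hn⟩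
    induction n with
    | zero => rw [Fin.Iic_eq_singleton_of_val_eq_zero rfl, sum_singleton, h0 _ rfl]
    | succ n ih =>
      rw [hj _ ⟨n, by omega⟩ rfl, ← ih (by omega), hsucc _ ⟨n, by omega⟩ rfl]
      ring

theorem IsPrefixSum.sub {α β α' β' : Fin K → ℤ} (h : IsPrefixSum α β) (h' : IsPrefixSum α' β') :
    IsPrefixSum (α - α') (β - β') := fun i => by
  simp only [Pi.sub_apply, sum_sub_distrib, h i, h' i]

theorem IsPrefixSum.eq_zero {α β : Fin K → ℤ} (h : IsPrefixSum α β) (hα : α = 0) : β = 0 := by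
  obtain ⟨h0, hsucc⟩ := isPrefixSum_iff.mp h
  ext ⟨n, hn⟩
  cases n with
  | zero => simp [h0 ⟨0, hn⟩ rfl, hα]
  | succ n => simp [hsucc ⟨n + 1, hn⟩ ⟨n, by omega⟩ rfl, hα]

end PrefixSum

section Strand

variable {K : ℕ}

def strandAlpha (p r : ℕ) (s : ℤ) : Fin K → ℤ := fun i => if p ≤ i ∧ (i : ℕ) < r then s else 0

def strandBeta (p r : ℕ) (s : ℤ) : Fin K → ℤ :=
  fun i => if (i : ℕ) = p then s else if (i : ℕ) = r then -s else 0

theorem isPrefixSum_strand {p r : ℕ} (s : ℤ) (hpr : p < r) :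
    IsPrefixSum (strandAlpha (K := K) p r s) (strandBeta p r s) := by
  refine isPrefixSum_iff.mpr ⟨fun i hi => ?_, fun i j hij => ?_⟩ <;>
    simp only [strandAlpha, strandBeta] <;> split_ifs <;> omega

theorem sum_ite_val_eq_le_one (p : ℕ) : ∑ i : Fin K, (if (i : ℕ) = p then 1 else 0 : ℤ) ≤ 1 := by
  rw [Fin.sum_univ_eq_sum_range (fun n => if n = p then (1 : ℤ) else 0), sum_ite_eq']
  split_ifs <;> norm_num

theorem sum_abs_strandBeta_le (p r : ℕ) {s : ℤ} (hs : |s| = 1) :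
    ∑ i, |strandBeta (K := K) p r s i| ≤ 2 := by
  calc ∑ i, |strandBeta (K := K) p r s i|
      ≤ ∑ i : Fin K, ((if (i : ℕ) = p then 1 else 0) + (if (i : ℕ) = r then 1 else 0) : ℤ) := by
        refine sum_le_sum fun i _ => ?_
        simp only [strandBeta]
        split_ifs <;> simp only [abs_neg, abs_zero, hs] <;> omega
    _ ≤ 2 := by
        rw [sum_add_distrib]
        linarith [sum_ite_val_eq_le_one (K := K) p, sum_ite_val_eq_le_one (K := K) r]

theorem sum_abs_strand_le (p r : ℕ) {s : ℤ} (hs : |s| = 1) :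
    ∑ i, |strandAlpha (K := K) p r s i| + ∑ i, |strandBeta (K := K) p r s i| ≤ K + 1 := by
  calc ∑ i, |strandAlpha (K := K) p r s i| + ∑ i, |strandBeta (K := K) p r s i|
      ≤ ∑ i : Fin K, (1 + if (i : ℕ) = p then 1 else 0 : ℤ) := by
        rw [← sum_add_distrib]
        refine sum_le_sum fun i _ => ?_
        simp only [strandAlpha, strandBeta]
        split_ifs <;> simp only [abs_neg, abs_zero, hs] <;> omega
    _ ≤ K + 1 := by
        rw [sum_add_distrib]
        simpa using sum_ite_val_eq_le_one (K := K) p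

theorem strandAlpha_conformalLE {α : Fin K → ℤ} {p r : ℕ} {s : ℤ} (hs : |s| = 1)
    (hrun : ∀ i : Fin K, p ≤ i → (i : ℕ) < r → 0 < s * α i) (i : Fin K) :
    strandAlpha p r s i ⊑ α i := by
  simp only [strandAlpha]
  split_ifs with h
  · exact .of_abs_eq_one hs (hrun i h.1 h.2)
  · exact .zero_left

theorem strandBeta_conformalLE {β : Fin K → ℤ} {p r : ℕ} {s : ℤ} (hs : |s| = 1)
    (hp : ∀ i : Fin K, (i : ℕ) = p → 0 < s * β i) (hr : ∀ i : Fin K, (i : ℕ) = r → s * β i < 0)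
    (i : Fin K) : strandBeta p r s i ⊑ β i := by
  simp only [strandBeta]
  split_ifs with hip hir
  · exact .of_abs_eq_one hs (hp i hip)
  · exact .of_abs_eq_one (by rwa [abs_neg]) (by linarith [hr i hir])
  · exact .zero_left

end Strand

theorem IsPrefixSum.exists_strand {K : ℕ} {α β : Fin K → ℤ} (h : IsPrefixSum α β) (hα : α ≠ 0) :
    ∃ (p r : ℕ) (s : ℤ), |s| = 1 ∧ p < K ∧ p < r ∧
      (∀ i : Fin K, p ≤ i → (i : ℕ) < r → 0 < s * α i) ∧
      (∀ i : Fin K, (i : ℕ) = p → 0 < s * β i) ∧ (∀ i : Fin K, (i : ℕ) = r → s * β i < 0) := by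
  obtain ⟨h0, hsucc⟩ := isPrefixSum_iff.mp h
  have hexp : ∃ n, ∃ hn : n < K, α ⟨n, hn⟩ ≠ 0 := by
    obtain ⟨⟨n, hn⟩, hne⟩ := Function.ne_iff.mp hα
    exact ⟨n, hn, hne⟩
  set p := Nat.find hexp
  obtain ⟨hpK, hαp⟩ : ∃ hpK : p < K, α ⟨p, hpK⟩ ≠ 0 := Nat.find_spec hexp
  have hbefore (n : ℕ) (hn : n < K) (hnp : n < p) : α ⟨n, hn⟩ = 0 := by
    by_contra hne
    exact Nat.find_min hexp hnp ⟨hn, hne⟩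
  set s := (α ⟨p, hpK⟩).sign
  -- `r = K` when the run reaches the end; then the `-s` of the strand lies outside `Fin K`.
  have hexr : ∃ n, p < n ∧ ∀ hn : n < K, s * α ⟨n, hn⟩ ≤ 0 :=
    ⟨K, hpK, fun hK => absurd hK K.lt_irrefl⟩
  set r := Nat.find hexr
  obtain ⟨hpr, hr⟩ : p < r ∧ ∀ hr : r < K, s * α ⟨r, hr⟩ ≤ 0 := Nat.find_spec hexr
  have hrun : ∀ i : Fin K, p ≤ i → (i : ℕ) < r → 0 < s * α i := by
    rintro ⟨n, hn⟩ hpn hnr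
    rcases (show p ≤ n from hpn).eq_or_lt with rfl | hpn
    · rw [Int.sign_mul_self_eq_abs]
      exact abs_pos.mpr hαp
    · have := Nat.find_min hexr hnr
      simp only [not_and, not_forall, not_le] at this
      exact (this hpn).choose_spec
  refine ⟨p, r, s, Int.abs_sign_of_ne_zero hαp, hpK, hpr, hrun, ?_, ?_⟩
  · intro i hip
    have hpos := hrun i hip.ge (hip ▸ hpr)
    rcases Nat.eq_zero_or_pos (i : ℕ) with hi | hi
    · rwa [h0 i hi]
    · rwa [hsucc i ⟨i - 1, by omega⟩ (by simp only; omega), hbefore (i - 1) (by omega) (by omega),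
        sub_zero]
  · rintro ⟨n, hn⟩ (rfl : n = r)
    obtain ⟨m, hm⟩ : ∃ m, r = m + 1 := Nat.exists_eq_succ_of_ne_zero (by omega)
    have hprev := hrun ⟨m, by omega⟩ (by simp only; omega) (by simp only; omega)
    rw [hsucc _ ⟨m, by omega⟩ hm.symm, mul_sub]
    linarith [hr hn]

-- `v : Fin K ⊕ Fin K → ℤ` encodes `(α, β) = (v ∘ .inl, v ∘ .inr) ∈ ℤ^{2K}`.
theorem exists_strand_conformalLE {K : ℕ} {v : Fin K ⊕ Fin K → ℤ}
    (hv : IsPrefixSum (v ∘ .inl) (v ∘ .inr)) (hv0 : v ≠ 0) :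
    ∃ u : Fin K ⊕ Fin K → ℤ,
      (IsPrefixSum (u ∘ .inl) (u ∘ .inr) ∧
        ∑ i, |u (.inl i)| + ∑ i, |u (.inr i)| ≤ K + 1 ∧ ∑ i, |u (.inr i)| ≤ 2) ∧
      u ≠ 0 ∧ (∀ i, u i ⊑ v i) ∧ IsPrefixSum ((v - u) ∘ .inl) ((v - u) ∘ .inr) := by
  have hα : v ∘ .inl ≠ 0 := fun hα => hv0 <| by
    ext (i | i)
    exacts [congrFun hα i, congrFun (hv.eq_zero hα) i]
  obtain ⟨p, r, s, hs, hpK, hpr, hrun, hβp, hβr⟩ := hv.exists_strand hα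
  refine ⟨Sum.elim (strandAlpha p r s) (strandBeta p r s),
    ⟨isPrefixSum_strand s hpr, sum_abs_strand_le p r hs, sum_abs_strandBeta_le p r hs⟩,
    fun hu => ?_, ?_, hv.sub (isPrefixSum_strand s hpr)⟩
  · have hsp : strandAlpha p r s ⟨p, hpK⟩ = 0 := congrFun hu (.inl ⟨p, hpK⟩)
    simp only [strandAlpha, le_refl, hpr, and_self, if_true] at hsp
    simp [hsp] at hs
  · rintro (i | i)
    exacts [strandAlpha_conformalLE hs hrun i, strandBeta_conformalLE hs hβp hβr i]

theorem stmt10_general (K : ℕ) (α β : Fin K → ℤ)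
    (hps : ∀ i, α i = ∑ j ∈ Finset.Iic i, β j) :
    ∃ (M : ℕ) (a b : Fin M → Fin K → ℤ),
      (∀ i, α i = ∑ t, a t i) ∧ (∀ i, β i = ∑ t, b t i) ∧
      ∀ t, (∀ i, a t i = ∑ j ∈ Finset.Iic i, b t j) ∧
           (∀ i, 0 ≤ a t i * α i ∧ |a t i| ≤ |α i|) ∧
           (∀ i, 0 ≤ b t i * β i ∧ |b t i| ≤ |β i|) ∧
           ((∑ i, |a t i|) + (∑ i, |b t i|) ≤ (K : ℤ) + 1) ∧
           ((∑ i, |b t i|) ≤ 2) := by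
  obtain ⟨M, g, hg, hgS⟩ :=
    exists_conformal_sum (fun _ => exists_strand_conformalLE) (v := Sum.elim α β) hps
  refine ⟨M, fun t i => g t (.inl i), fun t i => g t (.inr i), fun i => ?_, fun i => ?_,
    fun t => ?_⟩
  · simpa using (congrFun hg (.inl i)).symm
  · simpa using (congrFun hg (.inr i)).symm
  · obtain ⟨⟨hprefix, hnorm, hnormβ⟩, hconf⟩ := hgS t
    exact ⟨hprefix, fun i => hconf (.inl i), fun i => hconf (.inr i), hnorm, hnormβ⟩

theorem stmt10 (K : ℕ) (hK : 1 ≤ K) (α β : Fin K → ℤ)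
    (hps : ∀ i, α i = ∑ j ∈ Finset.Iic i, β j)
    (hnz : ¬(α = 0 ∧ β = 0)) :
    ∃ (M : ℕ) (a b : Fin M → Fin K → ℤ),
      (∀ i, α i = ∑ t, a t i) ∧ (∀ i, β i = ∑ t, b t i) ∧
      ∀ t, (∀ i, a t i = ∑ j ∈ Finset.Iic i, b t j) ∧
           (∀ i, 0 ≤ a t i * α i ∧ |a t i| ≤ |α i|) ∧
           (∀ i, 0 ≤ b t i * β i ∧ |b t i| ≤ |β i|) ∧
           ((∑ i, |a t i|) + (∑ i, |b t i|) ≤ (K : ℤ) + 1) ∧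
           ((∑ i, |b t i|) ≤ 2) :=
  stmt10_general K α β hps
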